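/- arXiv:1805.01551 — 2 statements merged into one kernel-verified Lean document; each statement's English description precedes it below -/
import Mathlib

section
/- Let $x \in \mathbb{R}^n$, $\tau_L \in \mathbb{R}^n$, and let $y_1, \dots, y_F \in \mathbb{R}^n$ satisfy $\|y_j - x\| \leq \|\tau_L - x\|$ for all $j$. Let $R > 2F$ be an integer and define $u = \frac{R-F}{R}(\tau_L - x) + \frac{1}{R}\sum_{j=1}^{F}(y_j - x)$. Then $(x - \tau_L)^T u \leq -\frac{R-2F}{R}\|x - \tau_L\|^2$. -/
open scoped RealInnerProductSpace

/-- Inner-product decrease inequality (α = 1 case): with `R - F` in-neighbors at the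
leader state `τL` and `F` adversarial in-neighbors `y j` no farther from `x` than `τL`,
the averaged control direction decreases the squared distance to `τL` when `R > 2F`. -/
theorem stmt_7 {n : ℕ} (F R : ℕ) (hRF : 2 * F < R)
    (x τL : EuclideanSpace ℝ (Fin n)) (y : Fin F → EuclideanSpace ℝ (Fin n))
    (hy : ∀ j, ‖y j - x‖ ≤ ‖τL - x‖) :
    ⟪x - τL, (((R : ℝ) - (F : ℝ)) / (R : ℝ)) • (τL - x) +
      ((R : ℝ)⁻¹) • (∑ j, (y j - x))⟫ ≤
      -(((R : ℝ) - 2 * (F : ℝ)) / (R : ℝ)) * ‖x - τL‖ ^ 2 := by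
  have hR0 : (0 : ℝ) < R := Nat.cast_pos.mpr (by omega)
  have hnorm : ‖τL - x‖ = ‖x - τL‖ := by rw [← norm_neg]; congr 1; abel
  have h1 : ⟪x - τL, τL - x⟫ = -‖x - τL‖ ^ 2 := by
    have : (τL - x) = -(x - τL) := by abel
    rw [this, inner_neg_right, real_inner_self_eq_norm_sq]
  have h2 : ∀ j, ⟪x - τL, y j - x⟫ ≤ ‖x - τL‖ ^ 2 := by
    intro j
    calc ⟪x - τL, y j - x⟫ ≤ ‖x - τL‖ * ‖y j - x‖ := real_inner_le_norm _ _
    _ ≤ ‖x - τL‖ * ‖x - τL‖ := by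
        apply mul_le_mul_of_nonneg_left _ (norm_nonneg _)
        rw [← hnorm]; exact hy j
    _ = ‖x - τL‖ ^ 2 := (sq ‖x - τL‖).symm
  have hsum : ⟪x - τL, ∑ j, (y j - x)⟫ ≤ (F : ℝ) * ‖x - τL‖ ^ 2 := by
    rw [inner_sum]
    calc ∑ j, ⟪x - τL, y j - x⟫ ≤ ∑ _j : Fin F, ‖x - τL‖ ^ 2 :=
          Finset.sum_le_sum fun j _ => h2 j
    _ = (F : ℝ) * ‖x - τL‖ ^ 2 := by simp [Finset.sum_const]
  rw [inner_add_right, real_inner_smul_right, real_inner_smul_right, h1]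
  have hF : (0 : ℝ) ≤ ((R : ℝ) - F) / R := by
    apply div_nonneg _ hR0.le
    have : (F : ℝ) ≤ R := by exact_mod_cast le_of_lt (lt_of_le_of_lt (by linarith) hRF)
    linarith
  have := mul_le_mul_of_nonneg_left hsum (inv_nonneg.mpr hR0.le)
  rw [div_eq_mul_inv, div_eq_mul_inv]
  linarith [this]
end

section
/- Let $x, \tau_L \in \mathbb{R}^n$ with $x \neq \tau_L$, let $0 < \alpha < 1$, let $R > 2F$ be integers with $F \geq 0$, and let $y_1,\dots,y_F \in \mathbb{R}^n$ satisfy $0 < \|y_j - x\| \leq \|\tau_L - x\|$. Define $u = \frac{R-F}{R}(\tau_L - x)\|\tau_L - x\|^{\alpha-1} + \frac{1}{R}\sum_{j=1}^F (y_j - x)\|y_j - x\|^{\alpha-1}$. Then $(x - \tau_L)^T u \leq -\frac{R-2F}{R}\|x - \tau_L\|^{1+\alpha}$. -/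
open scoped RealInnerProductSpace

/-- Fractional-power (`0 < α < 1`) decrease inequality for the continuous-time
controller. -/
theorem stmt_8 {n : ℕ} (F R : ℕ) (hRF : 2 * F < R) (α : ℝ) (hα0 : 0 < α) (hα1 : α < 1)
    (x τL : EuclideanSpace ℝ (Fin n)) (hx : x ≠ τL)
    (y : Fin F → EuclideanSpace ℝ (Fin n))
    (hy : ∀ j, 0 < ‖y j - x‖ ∧ ‖y j - x‖ ≤ ‖τL - x‖) :
    ⟪x - τL, ((((R : ℝ) - (F : ℝ)) / (R : ℝ)) * ‖τL - x‖ ^ (α - 1)) • (τL - x) +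
      ((R : ℝ)⁻¹) • (∑ j, (‖y j - x‖ ^ (α - 1)) • (y j - x))⟫ ≤
      -(((R : ℝ) - 2 * (F : ℝ)) / (R : ℝ)) * ‖x - τL‖ ^ (1 + α) := by
  have hd : (0:ℝ) < ‖x - τL‖ := norm_sub_pos_iff.mpr hx
  have hd' : ‖τL - x‖ = ‖x - τL‖ := norm_sub_rev _ _
  have hRpos : (0:ℝ) < (R:ℝ) := by
    have : 0 < R := lt_of_le_of_lt (Nat.zero_le _) hRF
    exact_mod_cast this
  set d := ‖x - τL‖ with hdef
  have h1 : (⟪x - τL, τL - x⟫ : ℝ) = -(d^2) := by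
    rw [← neg_sub x τL, inner_neg_right, real_inner_self_eq_norm_sq]
  have key : ∀ j, ‖y j - x‖ ^ (α - 1) * (⟪x - τL, y j - x⟫ : ℝ) ≤ d ^ (1 + α) := by
    intro j
    obtain ⟨h0, hle⟩ := hy j
    have hcs := real_inner_le_norm (x - τL) (y j - x)
    have hcoef : (0:ℝ) ≤ ‖y j - x‖ ^ (α - 1) := Real.rpow_nonneg (norm_nonneg _) _
    calc ‖y j - x‖ ^ (α - 1) * (⟪x - τL, y j - x⟫ : ℝ)
        ≤ ‖y j - x‖ ^ (α - 1) * (d * ‖y j - x‖) :=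
          mul_le_mul_of_nonneg_left hcs hcoef
      _ = d * (‖y j - x‖ ^ (α - 1) * ‖y j - x‖) := by ring
      _ = d * ‖y j - x‖ ^ α := by
          rw [← Real.rpow_add_one (ne_of_gt h0)]; ring_nf
      _ ≤ d * d ^ α := by
          have := Real.rpow_le_rpow (norm_nonneg (y j - x)) (hle.trans_eq hd') (le_of_lt hα0)
          exact mul_le_mul_of_nonneg_left this (le_of_lt hd)
      _ = d ^ (1 + α) := by rw [Real.rpow_add hd, Real.rpow_one]
  have hsum : ∑ j, (‖y j - x‖ ^ (α - 1)) * (⟪x - τL, y j - x⟫ : ℝ) ≤ (F:ℝ) * d ^ (1 + α) := by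
    calc ∑ j, (‖y j - x‖ ^ (α - 1)) * (⟪x - τL, y j - x⟫ : ℝ)
        ≤ ∑ _j : Fin F, d ^ (1 + α) := Finset.sum_le_sum fun j _ => key j
      _ = (F:ℝ) * d ^ (1 + α) := by
          simp [Finset.sum_const, Finset.card_univ, mul_comm]
  rw [inner_add_right, inner_smul_right, inner_smul_right, inner_sum]
  simp only [inner_smul_right]
  rw [h1, hd']
  have hpow : d ^ (α - 1) * d ^ 2 = d ^ (1 + α) := by
    rw [← Real.rpow_natCast d 2, ← Real.rpow_add hd]
    norm_num
    congr 1
    ring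
  have h2 : (((R:ℝ) - (F:ℝ)) / (R:ℝ) * d ^ (α - 1)) * (-(d^2))
      = -(((R:ℝ) - (F:ℝ)) / (R:ℝ)) * d ^ (1 + α) := by
    rw [show (((R:ℝ) - (F:ℝ)) / (R:ℝ) * d ^ (α - 1)) * (-(d^2))
        = -(((R:ℝ) - (F:ℝ)) / (R:ℝ) * (d ^ (α - 1) * d ^ 2)) by ring, hpow]
    ring
  have hstep : ((R:ℝ))⁻¹ * (∑ j, (‖y j - x‖ ^ (α - 1)) * (⟪x - τL, y j - x⟫ : ℝ))
      ≤ ((R:ℝ))⁻¹ * ((F:ℝ) * d ^ (1 + α)) :=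
    mul_le_mul_of_nonneg_left hsum (by positivity)
  have h3 : -(((R:ℝ) - (F:ℝ)) / (R:ℝ)) * d ^ (1 + α) + ((R:ℝ))⁻¹ * ((F:ℝ) * d ^ (1 + α))
      = -(((R:ℝ) - 2 * (F:ℝ)) / (R:ℝ)) * d ^ (1 + α) := by
    field_simp
    ring
  linarith [hstep, h2, h3]
end
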